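/- arXiv:2406.18076 — 4 statements merged into one kernel-verified Lean document; each statement's English description precedes it below -/
import Mathlib

section
/- For the linear consensus ODE du/dt = Qu with Q = M⁻¹A - I for a connected graph with all degrees ≥ 1, every solution converges as t → ∞ to the constant vector ω_∞·1 with ω_∞ = (∑ᵢ deg(i) uᵢ(0))/(∑ⱼ deg(j)). -/
open Finset Filter Matrix Real Topology

/-!
Write `L = D - A` for the graph Laplacian, so that `D Q = -L`. Since `1ᵀ L = 0`, the weighted mean
`∑ dᵢ uᵢ` is conserved, hence `u - ω 1` stays in the hyperplane `∑ dᵢ vᵢ = 0`. On that hyperplane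
`⟨v, L v⟩ = ½ ∑_{i ~ j} (vᵢ - vⱼ)²` vanishes only at `v = 0` (by connectedness `L v = 0` forces `v`
to be constant), so by compactness of the unit sphere it dominates `γ ∑ dᵢ vᵢ²` for some `γ > 0`.
The energy `E = ∑ dᵢ (uᵢ - ω)²` has `E' = -2 ⟨u - ω, L (u - ω)⟩ ≤ -2γ E`, so it decays exponentially.
-/

theorem exists_pos_mul_norm_sq_le {E : Type*} [NormedAddCommGroup E] [NormedSpace ℝ E]
    [FiniteDimensional ℝ E] {q : E → ℝ} (hq : Continuous q)
    (hsmul : ∀ (c : ℝ) v, q (c • v) = c ^ 2 * q v) (hpos : ∀ v ≠ 0, 0 < q v) :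
    ∃ γ > 0, ∀ v, γ * ‖v‖ ^ 2 ≤ q v := by
  obtain ⟨γ, hγ, hmin⟩ := (isCompact_sphere (0 : E) 1).exists_forall_le' hq.continuousOn
    fun v hv ↦ hpos v (ne_zero_of_mem_unit_sphere ⟨v, hv⟩)
  refine ⟨γ, hγ, fun v ↦ ?_⟩
  rcases eq_or_ne v 0 with rfl | hv
  · simp [show q 0 = 0 by simpa using hsmul 0 0]
  have hunit : ‖v‖⁻¹ • v ∈ Metric.sphere (0 : E) 1 := by simp [norm_smul, hv]
  calc γ * ‖v‖ ^ 2 ≤ q (‖v‖⁻¹ • v) * ‖v‖ ^ 2 := by gcongr; exact hmin _ hunit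
    _ = q v := by
      rw [hsmul, mul_comm, ← mul_assoc, ← mul_pow, mul_inv_cancel₀ (norm_ne_zero_iff.mpr hv),
        one_pow, one_mul]

theorem le_mul_exp_of_hasDerivAt_le_neg_mul {E E' : ℝ → ℝ} {γ : ℝ}
    (hE : ∀ t, HasDerivAt E (E' t) t) (hdecay : ∀ t, E' t ≤ -γ * E t) {t : ℝ} (ht : 0 ≤ t) :
    E t ≤ E 0 * exp (-γ * t) := by
  have hF : ∀ s, HasDerivAt (fun s ↦ E s * exp (γ * s))
      (E' s * exp (γ * s) + E s * (exp (γ * s) * γ)) s := fun s ↦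
    (hE s).mul (by simpa using ((hasDerivAt_id s).const_mul γ).exp)
  have hanti : Antitone fun s ↦ E s * exp (γ * s) := by
    refine antitone_of_deriv_nonpos (fun s ↦ (hF s).differentiableAt) fun s ↦ ?_
    rw [(hF s).deriv]
    nlinarith [hdecay s, exp_pos (γ * s)]
  have hmono := hanti ht
  simp only [mul_zero, exp_zero, mul_one] at hmono
  rwa [neg_mul, exp_neg, ← div_eq_mul_inv, le_div_iff₀ (exp_pos _)]

theorem tendsto_of_sq_sub_le {α : Type*} {l : Filter α} {f g : α → ℝ} {a : ℝ}
    (hg : Tendsto g l (𝓝 0)) (hfg : ∀ᶠ x in l, (f x - a) ^ 2 ≤ g x) : Tendsto f l (𝓝 a) := by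
  rw [tendsto_iff_norm_sub_tendsto_zero]
  refine squeeze_zero' (Eventually.of_forall fun _ ↦ norm_nonneg _) ?_
    (by simpa using (continuous_sqrt.tendsto 0).comp hg)
  filter_upwards [hfg] with x hx
  exact Real.le_sqrt_of_sq_le (by rwa [Real.norm_eq_abs, sq_abs])

theorem sum_mul_sq_le_sum_mul_norm_sq {ι : Type*} [Fintype ι] {d : ι → ℝ} (hd : ∀ i, 0 ≤ d i)
    (v : ι → ℝ) : ∑ i, d i * v i ^ 2 ≤ (∑ i, d i) * ‖v‖ ^ 2 := by
  rw [sum_mul]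
  refine sum_le_sum fun i _ ↦ mul_le_mul_of_nonneg_left ?_ (hd i)
  rw [← sq_abs, ← Real.norm_eq_abs]
  exact pow_le_pow_left₀ (norm_nonneg _) (norm_le_pi_norm v i) 2

namespace SimpleGraph

variable {V : Type*} [Fintype V]

theorem sum_degree_pos (G : SimpleGraph V) [DecidableRel G.Adj] [Nonempty V]
    (hdeg : ∀ i, 0 < G.degree i) : (0 : ℝ) < ∑ i, (G.degree i : ℝ) :=
  sum_pos (fun i _ ↦ Nat.cast_pos.mpr (hdeg i)) univ_nonempty

variable [DecidableEq V]

theorem Connected.eq_const_of_dotProduct_lapMatrix_mulVec_eq_zero {G : SimpleGraph V}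
    [DecidableRel G.Adj] (hconn : G.Connected) {v : V → ℝ}
    (hv : v ⬝ᵥ (G.lapMatrix ℝ *ᵥ v) = 0) (i : V) : v = fun _ ↦ v i := by
  rw [← toLinearMap₂'_apply', lapMatrix_toLinearMap₂'_apply'_eq_zero_iff_forall_reachable] at hv
  exact funext fun j ↦ hv j i (hconn j i)

variable (G : SimpleGraph V) [DecidableRel G.Adj]

theorem sum_lapMatrix_mulVec {R : Type*} [CommRing R] (v : V → R) :
    ∑ i, (G.lapMatrix R *ᵥ v) i = 0 := by
  calc ∑ i, (G.lapMatrix R *ᵥ v) i = (fun _ ↦ 1) ⬝ᵥ (G.lapMatrix R *ᵥ v) := by simp [dotProduct]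
    _ = (G.lapMatrix R *ᵥ fun _ ↦ 1) ⬝ᵥ v := by
      rw [dotProduct_mulVec, ← mulVec_transpose, (G.isSymm_lapMatrix R).eq]
    _ = 0 := by rw [lapMatrix_mulVec_const_eq_zero, zero_dotProduct]

theorem dotProduct_lapMatrix_mulVec_nonneg (v : V → ℝ) : 0 ≤ v ⬝ᵥ (G.lapMatrix ℝ *ᵥ v) := by
  rw [← toLinearMap₂'_apply', lapMatrix_toLinearMap₂']
  positivity

theorem exists_pos_mul_sum_degree_mul_sq_le (hconn : G.Connected) (hdeg : ∀ i, 0 < G.degree i) :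
    ∃ γ > 0, ∀ v : V → ℝ, ∑ i, (G.degree i : ℝ) * v i = 0 →
      γ * ∑ i, (G.degree i : ℝ) * v i ^ 2 ≤ v ⬝ᵥ (G.lapMatrix ℝ *ᵥ v) := by
  have hd : ∀ i, (0 : ℝ) < G.degree i := fun i ↦ Nat.cast_pos.mpr (hdeg i)
  have := hconn.nonempty
  have hS := G.sum_degree_pos hdeg
  set W := LinearMap.ker (dotProductBilin ℝ ℝ fun i ↦ (G.degree i : ℝ))
  have hW : ∀ v, v ∈ W ↔ ∑ i, (G.degree i : ℝ) * v i = 0 := fun v ↦ by simp [W, dotProduct]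
  have hpos : ∀ v : W, v ≠ 0 → 0 < (v : V → ℝ) ⬝ᵥ (G.lapMatrix ℝ *ᵥ v) := by
    rintro ⟨v, hvW⟩ hv0
    refine (G.dotProduct_lapMatrix_mulVec_nonneg v).lt_of_ne fun h ↦ hv0 ?_
    obtain ⟨i⟩ := hconn.nonempty
    have hconst := hconn.eq_const_of_dotProduct_lapMatrix_mulVec_eq_zero h.symm i
    rw [hW, hconst, ← sum_mul] at hvW
    simp only [Submodule.mk_eq_zero]
    rw [hconst, (mul_eq_zero.mp hvW).resolve_left hS.ne']
    rfl
  obtain ⟨γ, hγ, hle⟩ := exists_pos_mul_norm_sq_le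
    (q := fun v : W ↦ (v : V → ℝ) ⬝ᵥ (G.lapMatrix ℝ *ᵥ v)) (by fun_prop)
    (fun c v ↦ by simp [mulVec_smul, smul_dotProduct, dotProduct_smul]; ring) hpos
  refine ⟨γ / ∑ i, (G.degree i : ℝ), div_pos hγ hS, fun v hv ↦ ?_⟩
  calc (γ / ∑ i, (G.degree i : ℝ)) * ∑ i, (G.degree i : ℝ) * v i ^ 2
      ≤ (γ / ∑ i, (G.degree i : ℝ)) * ((∑ i, (G.degree i : ℝ)) * ‖v‖ ^ 2) := by
        gcongr; exact sum_mul_sq_le_sum_mul_norm_sq (fun i ↦ (hd i).le) v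
    _ = γ * ‖(⟨v, (hW v).mpr hv⟩ : W)‖ ^ 2 := by field_simp; rfl
    _ ≤ v ⬝ᵥ (G.lapMatrix ℝ *ᵥ v) := hle _

theorem degMatrix_mul_eq_neg_lapMatrix (hdeg : ∀ i, 0 < G.degree i) {Q : Matrix V V ℝ}
    (hQ : ∀ i j, Q i j = if i = j then -1 else if G.Adj i j then ((G.degree i : ℝ))⁻¹ else 0) :
    G.degMatrix ℝ * Q = -G.lapMatrix ℝ := by
  ext i j
  have hi : (G.degree i : ℝ) ≠ 0 := by exact_mod_cast (hdeg i).ne'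
  rw [degMatrix, diagonal_mul, hQ, lapMatrix, degMatrix]
  by_cases hij : i = j
  · subst hij; simp
  · by_cases hadj : G.Adj i j <;> simp [hij, hadj, hi]

theorem degree_mul_mulVec_apply {Q : Matrix V V ℝ} (hDQ : G.degMatrix ℝ * Q = -G.lapMatrix ℝ)
    (v : V → ℝ) (i : V) : (G.degree i : ℝ) * (Q *ᵥ v) i = -(G.lapMatrix ℝ *ᵥ v) i := by
  rw [← degMatrix_mulVec_apply, mulVec_mulVec, hDQ, neg_mulVec, Pi.neg_apply]

theorem lapMatrix_mulVec_sub_const {R : Type*} [CommRing R] (v : V → R) (c : R) :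
    (G.lapMatrix R *ᵥ fun i ↦ v i - c) = G.lapMatrix R *ᵥ v := by
  have hc : (fun i ↦ v i - c) = v - c • fun _ ↦ 1 := by ext; simp
  rw [hc, mulVec_sub, mulVec_smul, lapMatrix_mulVec_const_eq_zero, smul_zero, sub_zero]

variable {Q : Matrix V V ℝ} {u : ℝ → V → ℝ}

theorem sum_degree_mul_eq_of_hasDerivAt (hDQ : G.degMatrix ℝ * Q = -G.lapMatrix ℝ)
    (hODE : ∀ t i, HasDerivAt (fun s ↦ u s i) ((Q *ᵥ u t) i) t) (t : ℝ) :
    ∑ i, (G.degree i : ℝ) * u t i = ∑ i, (G.degree i : ℝ) * u 0 i := by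
  have hderiv : ∀ s, HasDerivAt (fun s ↦ ∑ i, (G.degree i : ℝ) * u s i) 0 s := fun s ↦ by
    simpa only [G.degree_mul_mulVec_apply hDQ, sum_neg_distrib, sum_lapMatrix_mulVec, neg_zero]
      using HasDerivAt.fun_sum (u := univ) fun i _ ↦ (hODE s i).const_mul (G.degree i : ℝ)
  exact is_const_of_deriv_eq_zero (fun s ↦ (hderiv s).differentiableAt)
    (fun s ↦ (hderiv s).deriv) t 0

theorem hasDerivAt_sum_degree_mul_sq_sub (hDQ : G.degMatrix ℝ * Q = -G.lapMatrix ℝ)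
    (hODE : ∀ t i, HasDerivAt (fun s ↦ u s i) ((Q *ᵥ u t) i) t) (c t : ℝ) :
    HasDerivAt (fun s ↦ ∑ i, (G.degree i : ℝ) * (u s i - c) ^ 2)
      (-2 * ((fun i ↦ u t i - c) ⬝ᵥ (G.lapMatrix ℝ *ᵥ fun i ↦ u t i - c))) t := by
  refine (HasDerivAt.fun_sum (u := univ) fun i _ ↦
    (((hODE t i).sub_const c).pow 2).const_mul (G.degree i : ℝ)).congr_deriv ?_
  rw [lapMatrix_mulVec_sub_const, dotProduct, mul_sum]
  refine sum_congr rfl fun i _ ↦ ?_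
  have := G.degree_mul_mulVec_apply hDQ (u t) i
  linear_combination (2 * (u t i - c)) * this

end SimpleGraph

theorem stmt9_general (N : ℕ) (G : SimpleGraph (Fin N)) [DecidableRel G.Adj]
    (hconn : G.Connected) (hdeg : ∀ i, 1 ≤ G.degree i)
    (Q : Matrix (Fin N) (Fin N) ℝ)
    (hQ : ∀ i j, Q i j =
      if i = j then -1 else if G.Adj i j then ((G.degree i : ℝ))⁻¹ else 0)
    (u : ℝ → Fin N → ℝ)
    (hODE : ∀ t i, HasDerivAt (fun s => u s i) (Q.mulVec (u t) i) t) :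
    ∀ i, Filter.Tendsto (fun t => u t i) Filter.atTop
      (nhds ((∑ k, (G.degree k : ℝ) * u 0 k) / (∑ k, (G.degree k : ℝ)))) := by
  have hDQ := G.degMatrix_mul_eq_neg_lapMatrix hdeg hQ
  set ω := (∑ k, (G.degree k : ℝ) * u 0 k) / ∑ k, (G.degree k : ℝ)
  set E : ℝ → ℝ := fun t ↦ ∑ k, (G.degree k : ℝ) * (u t k - ω) ^ 2
  have := hconn.nonempty
  have hS := G.sum_degree_pos hdeg
  have hmean : ∀ t, ∑ k, (G.degree k : ℝ) * (u t k - ω) = 0 := fun t ↦ by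
    simp only [mul_sub, sum_sub_distrib, ← sum_mul,
      G.sum_degree_mul_eq_of_hasDerivAt hDQ hODE t, ω, mul_div_cancel₀ _ hS.ne', sub_self]
  obtain ⟨γ, hγ, hgap⟩ := G.exists_pos_mul_sum_degree_mul_sq_le hconn hdeg
  have hdecay : ∀ t, 0 ≤ t → E t ≤ E 0 * exp (-(2 * γ) * t) := fun t ht ↦
    le_mul_exp_of_hasDerivAt_le_neg_mul (G.hasDerivAt_sum_degree_mul_sq_sub hDQ hODE ω)
      (fun s ↦ by linarith [hgap _ (hmean s)]) ht
  have hexp : Tendsto (fun t ↦ E 0 * exp (-(2 * γ) * t)) atTop (𝓝 0) := by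
    simpa using (tendsto_exp_atBot.comp
      (tendsto_id.const_mul_atTop_of_neg (show -(2 * γ) < 0 by linarith))).const_mul (E 0)
  intro i
  refine tendsto_of_sq_sub_le hexp ?_
  filter_upwards [eventually_ge_atTop 0] with t ht
  refine le_trans ?_ (hdecay t ht)
  calc (u t i - ω) ^ 2 ≤ (G.degree i : ℝ) * (u t i - ω) ^ 2 :=
        le_mul_of_one_le_left (sq_nonneg _) (by exact_mod_cast hdeg i)
    _ ≤ E t := single_le_sum (f := fun k ↦ (G.degree k : ℝ) * (u t k - ω) ^ 2)
        (fun k _ ↦ by positivity) (mem_univ i)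

theorem stmt9 (N : ℕ) (hN : 1 ≤ N) (G : SimpleGraph (Fin N)) [DecidableRel G.Adj]
    (hconn : G.Connected) (hdeg : ∀ i, 1 ≤ G.degree i)
    (Q : Matrix (Fin N) (Fin N) ℝ)
    (hQ : ∀ i j, Q i j =
      if i = j then -1 else if G.Adj i j then ((G.degree i : ℝ))⁻¹ else 0)
    (u : ℝ → Fin N → ℝ)
    (hODE : ∀ t i, HasDerivAt (fun s => u s i) (Q.mulVec (u t) i) t) :
    ∀ i, Filter.Tendsto (fun t => u t i) Filter.atTop
      (nhds ((∑ k, (G.degree k : ℝ) * u 0 k) / (∑ k, (G.degree k : ℝ)))) :=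
  stmt9_general N G hconn hdeg Q hQ u hODE
end

section
/- Let D : ℝ → ℝ with D(z) = -W'(z) for W smooth, even, strictly convex with global minimum at 0, and suppose ‖W''‖_∞ < ∞. Let 0 < Δt ≤ 1/‖W''‖_∞. For opinions (ωᵢ)ᵢ and ψᵢ := ωᵢ + Δt (1/#Iᵢ) ∑_{j∈Iᵢ} D(ωᵢ - ωⱼ), it holds that ψᵢ lies in the convex hull of {ωᵢ} ∪ {ωⱼ : j ∈ Iᵢ}, i.e., min(ωᵢ, min_{j∈Iᵢ} ωⱼ) ≤ ψᵢ ≤ max(ωᵢ, max_{j∈Iᵢ} ωⱼ). -/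
open Finset

theorem stmt10 (N : ℕ)
    (I : Fin N → Finset (Fin N)) (hne : ∀ i, (I i).Nonempty)
    (W : ℝ → ℝ) (hWsmooth : ContDiff ℝ (⊤ : ℕ∞) W)
    (hWeven : ∀ z, W (-z) = W z)
    (hWconv : StrictConvexOn ℝ Set.univ W)
    (hWminUnique : ∀ z ≠ 0, W 0 < W z)
    (D : ℝ → ℝ) (hD : ∀ z, D z = -(deriv W z))
    (K : ℝ) (hKpos : 0 < K)
    (hK : ∀ z, |deriv (deriv W) z| ≤ K)
    (Δt : ℝ) (hΔt : 0 < Δt) (hΔtK : Δt ≤ 1 / K)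
    (ω : Fin N → ℝ) :
    ∀ i, (insert i (I i)).inf' (Finset.insert_nonempty i (I i)) ω
          ≤ ω i + Δt * ((1 / ((I i).card : ℝ)) * ∑ j ∈ I i, D (ω i - ω j))
      ∧ ω i + Δt * ((1 / ((I i).card : ℝ)) * ∑ j ∈ I i, D (ω i - ω j))
          ≤ (insert i (I i)).sup' (Finset.insert_nonempty i (I i)) ω := by
  -- basic facts
  have hW1 : Differentiable ℝ W := hWsmooth.differentiable (by norm_num)
  have hW2 : Differentiable ℝ (deriv W) :=
    ((contDiff_infty_iff_deriv.mp (hWsmooth.of_le (by simp))).2).differentiable (by norm_num)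
  have hmin : ∀ z, W 0 ≤ W z := by
    intro z
    by_cases hz : z = 0
    · simp [hz]
    · exact (hWminUnique z hz).le
  have hd0 : deriv W 0 = 0 := by
    have : IsLocalMin W 0 := IsMinOn.isLocalMin (fun z _ => hmin z) Filter.univ_mem
    exact this.deriv_eq_zero
  have hconv : ConvexOn ℝ Set.univ W := hWconv.convexOn
  -- |deriv W z| ≤ K * |z|
  have hlip : ∀ z : ℝ, |deriv W z| ≤ K * |z| := by
    intro z
    have := Convex.norm_image_sub_le_of_norm_deriv_le
      (f := deriv W) (C := K) (s := Set.univ)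
      (fun x _ => hW2 x)
      (fun x _ => by simpa [Real.norm_eq_abs] using hK x)
      convex_univ (Set.mem_univ 0) (Set.mem_univ z)
    simpa [hd0, Real.norm_eq_abs] using this
  -- sign of deriv W
  have hsign_pos : ∀ z : ℝ, 0 < z → 0 ≤ deriv W z := by
    intro z hz
    have hs := ConvexOn.slope_le_deriv hconv (Set.mem_univ 0) (Set.mem_univ z) hz
      (hW1 z)
    have : (0:ℝ) ≤ slope W 0 z := by
      rw [slope_def_field]
      exact div_nonneg (by linarith [hmin z]) (by linarith)
    linarith
  have hsign_neg : ∀ z : ℝ, z < 0 → deriv W z ≤ 0 := by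
    intro z hz
    have hs := ConvexOn.deriv_le_slope hconv (Set.mem_univ z) (Set.mem_univ 0) hz
      (hW1 z)
    have : slope W z 0 ≤ 0 := by
      rw [slope_def_field]
      have := hmin z
      have hz0 : (0:ℝ) - z > 0 := by linarith
      have : W 0 - W z ≤ 0 := by linarith
      exact div_nonpos_of_nonpos_of_nonneg this (by linarith)
    linarith
  -- per-pair bound
  have key : ∀ a b : ℝ, min a b ≤ a + Δt * D (a - b) ∧ a + Δt * D (a - b) ≤ max a b := by
    intro a b
    have hDab := hD (a - b)
    have hKΔ : Δt * K ≤ 1 := by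
      rw [le_div_iff₀ hKpos] at hΔtK; linarith
    rcases le_total b a with h | h
    · -- a - b ≥ 0, D ≤ 0, Δt*D ≥ -(a-b)
      have hz : 0 ≤ a - b := by linarith
      have hDle : D (a - b) ≤ 0 := by
        rcases eq_or_lt_of_le hz with he | hlt
        · rw [← he, hD, hd0]; norm_num
        · have h5 := hsign_pos _ hlt; rw [hDab]; linarith
      have habs : |deriv W (a - b)| ≤ K * (a - b) := by
        simpa [abs_of_nonneg hz] using hlip (a - b)
      have hDge : -(K * (a - b)) ≤ D (a - b) := by
        rw [hDab]
        have := (abs_le.mp habs).2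
        linarith
      constructor
      · have h1 : -(a - b) ≤ Δt * D (a - b) := by
          have h2 : Δt * (-(K * (a - b))) ≤ Δt * D (a - b) :=
            mul_le_mul_of_nonneg_left hDge hΔt.le
          have h3 : -(a - b) ≤ Δt * (-(K * (a - b))) := by
            have : Δt * K * (a - b) ≤ 1 * (a - b) :=
              mul_le_mul_of_nonneg_right hKΔ hz
            nlinarith
          linarith
        have : min a b = b := min_eq_right h
        linarith
      · have : max a b = a := max_eq_left h
        nlinarith
    · -- a - b ≤ 0, D ≥ 0, Δt*D ≤ b - a
      have hz : a - b ≤ 0 := by linarith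
      have hDge : 0 ≤ D (a - b) := by
        rcases eq_or_lt_of_le hz with he | hlt
        · rw [he, hD, hd0]; norm_num
        · have h5 := hsign_neg _ hlt; rw [hDab]; linarith
      have habs : |deriv W (a - b)| ≤ K * (b - a) := by
        have := hlip (a - b)
        rw [abs_of_nonpos hz] at this
        linarith
      have hDle : D (a - b) ≤ K * (b - a) := by
        rw [hDab]
        have := (abs_le.mp habs).1
        linarith
      constructor
      · have : min a b = a := min_eq_left h
        nlinarith
      · have h1 : Δt * D (a - b) ≤ b - a := by
          have h2 : Δt * D (a - b) ≤ Δt * (K * (b - a)) :=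
            mul_le_mul_of_nonneg_left hDle hΔt.le
          have h3 : Δt * (K * (b - a)) ≤ b - a := by
            have : Δt * K * (b - a) ≤ 1 * (b - a) :=
              mul_le_mul_of_nonneg_right hKΔ (by linarith)
            nlinarith
          linarith
        have : max a b = b := max_eq_right h
        linarith
  intro i
  set m := (insert i (I i)).inf' (Finset.insert_nonempty i (I i)) ω with hm
  set M := (insert i (I i)).sup' (Finset.insert_nonempty i (I i)) ω with hM
  have hmi : m ≤ ω i := inf'_le _ (mem_insert_self i _)
  have hMi : ω i ≤ M := le_sup' _ (mem_insert_self i _)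
  have hc : (0:ℝ) < ((I i).card : ℝ) := by
    exact_mod_cast card_pos.mpr (hne i)
  have hterm : ∀ j ∈ I i, m ≤ ω i + Δt * D (ω i - ω j) ∧
      ω i + Δt * D (ω i - ω j) ≤ M := by
    intro j hj
    have hmj : m ≤ ω j := inf'_le _ (mem_insert_of_mem hj)
    have hMj : ω j ≤ M := le_sup' _ (mem_insert_of_mem hj)
    obtain ⟨h1, h2⟩ := key (ω i) (ω j)
    exact ⟨le_trans (le_min hmi hmj) h1, le_trans h2 (max_le hMi hMj)⟩
  have hrw : ω i + Δt * ((1 / ((I i).card : ℝ)) * ∑ j ∈ I i, D (ω i - ω j))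
      = (1 / ((I i).card : ℝ)) * ∑ j ∈ I i, (ω i + Δt * D (ω i - ω j)) := by
    rw [Finset.sum_add_distrib, Finset.sum_const, ← Finset.mul_sum]
    field_simp
    ring
  rw [hrw]
  constructor
  · have hs : ((I i).card : ℝ) * m ≤ ∑ j ∈ I i, (ω i + Δt * D (ω i - ω j)) := by
      calc ((I i).card : ℝ) * m = ∑ _j ∈ I i, m := by
            rw [Finset.sum_const]; ring
        _ ≤ _ := Finset.sum_le_sum (fun j hj => (hterm j hj).1)
    rw [one_div, inv_mul_eq_div, le_div_iff₀ hc]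
    linarith
  · have hs : ∑ j ∈ I i, (ω i + Δt * D (ω i - ω j)) ≤ ((I i).card : ℝ) * M := by
      calc ∑ j ∈ I i, (ω i + Δt * D (ω i - ω j))
          ≤ ∑ _j ∈ I i, M := Finset.sum_le_sum (fun j hj => (hterm j hj).2)
        _ = ((I i).card : ℝ) * M := by rw [Finset.sum_const]; ring
    rw [one_div, inv_mul_eq_div, div_le_iff₀ hc]
    linarith
end

section
/- If Δt ≤ ‖∂_z D‖_∞⁻¹ and all opinions lie in an interval Ω = (-1,1), then after one explicit Euler step ψᵢ := ωᵢ + Δt (1/#Iᵢ) ∑_{j∈Iᵢ} D(ωᵢ - ωⱼ), all ψᵢ remain in Ω. -/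
open Finset

theorem stmt11 (N : ℕ)
    (I : Fin N → Finset (Fin N)) (hne : ∀ i, (I i).Nonempty)
    (W : ℝ → ℝ) (hWsmooth : ContDiff ℝ (⊤ : ℕ∞) W)
    (hWeven : ∀ z, W (-z) = W z)
    (hWconv : StrictConvexOn ℝ Set.univ W)
    (hWminUnique : ∀ z ≠ 0, W 0 < W z)
    (D : ℝ → ℝ) (hD : ∀ z, D z = -(deriv W z))
    (K : ℝ) (hKpos : 0 < K)
    (hK : ∀ z, |deriv (deriv W) z| ≤ K)
    (Δt : ℝ) (hΔt : 0 < Δt) (hΔtK : Δt ≤ 1 / K)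
    (ω : Fin N → ℝ) (hΩ : ∀ i, ω i ∈ Set.Ioo (-1 : ℝ) 1) :
    ∀ i, ω i + Δt * ((1 / ((I i).card : ℝ)) * ∑ j ∈ I i, D (ω i - ω j))
        ∈ Set.Ioo (-1 : ℝ) 1 := by
  set f := deriv W with hf
  have hWdiff : Differentiable ℝ W := hWsmooth.differentiable (by simp)
  have hWi : ContDiff ℝ ((⊤ : ℕ∞) : WithTop ℕ∞) W := hWsmooth.of_le (by simp)
  have hfdiff : Differentiable ℝ f := (contDiff_infty_iff_deriv.mp hWi).2.differentiable (by simp)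
  -- f 0 = 0
  have hf0 : f 0 = 0 := by
    have h1 : (fun x : ℝ => W (-x)) = W := funext hWeven
    have h2 : deriv (fun x : ℝ => W (-x)) 0 = -deriv W (-(0:ℝ)) := by
      simpa using deriv_comp_neg W 0
    rw [h1] at h2
    simp only [neg_zero] at h2
    have : f 0 = -f 0 := h2
    linarith
  have hWconv' : ConvexOn ℝ Set.univ W := hWconv.convexOn
  -- sign: z ≥ 0 → f z ≥ 0 ; z ≤ 0 → f z ≤ 0
  have hsign_pos : ∀ z : ℝ, 0 ≤ z → 0 ≤ f z := by
    intro z hz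
    rcases eq_or_lt_of_le hz with h | h
    · rw [← h, hf0]
    · have hslope : slope W 0 z ≤ deriv W z :=
        hWconv'.slope_le_deriv (Set.mem_univ _) (Set.mem_univ _) h (hWdiff.differentiableAt)
      have : 0 < slope W 0 z := by
        rw [slope_def_field]
        have h1 := hWminUnique z (ne_of_gt h)
        have h2 : (0:ℝ) < z - 0 := by linarith
        exact div_pos (by linarith) h2
      linarith
  have hsign_neg : ∀ z : ℝ, z ≤ 0 → f z ≤ 0 := by
    intro z hz
    rcases eq_or_lt_of_le hz with h | h
    · rw [h, hf0]
    · have hslope : deriv W z ≤ slope W z 0 :=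
        hWconv'.deriv_le_slope (Set.mem_univ _) (Set.mem_univ _) h (hWdiff.differentiableAt)
      have : slope W z 0 < 0 := by
        rw [slope_def_field]
        have h1 := hWminUnique z (ne_of_lt h)
        have h2 : W 0 - W z < 0 := by linarith
        have h3 : (0:ℝ) < 0 - z := by linarith
        exact div_neg_of_neg_of_pos h2 h3
      linarith
  -- Lipschitz bound: |f z| ≤ K * |z|
  have hlip : ∀ z : ℝ, |f z| ≤ K * |z| := by
    intro z
    have := Convex.norm_image_sub_le_of_norm_deriv_le (f := f)
      (fun x _ => hfdiff x) (fun x _ => by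
        simpa [Real.norm_eq_abs] using hK x) convex_univ
      (Set.mem_univ (0:ℝ)) (Set.mem_univ z)
    simpa [hf0, Real.norm_eq_abs] using this
  -- per-term bound
  have hterm : ∀ a b : ℝ, a ∈ Set.Ioo (-1:ℝ) 1 → b ∈ Set.Ioo (-1:ℝ) 1 →
      a + Δt * D (a - b) ∈ Set.Ioo (-1:ℝ) 1 := by
    intro a b ha hb
    rw [hD]
    set z := a - b with hz
    have hKz : Δt * K ≤ 1 := by
      rw [le_div_iff₀ hKpos] at hΔtK; linarith
    rcases le_total 0 z with h | h
    · have h1 : 0 ≤ f z := hsign_pos z h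
      have h2 : Δt * f z ≤ z := by
        have : f z ≤ K * z := by
          have := hlip z
          rwa [abs_of_nonneg h1, abs_of_nonneg h] at this
        calc Δt * f z ≤ Δt * (K * z) := by nlinarith
          _ = (Δt * K) * z := by ring
          _ ≤ 1 * z := by nlinarith
          _ = z := one_mul z
      constructor
      · have : a + Δt * -f z ≥ a - z := by linarith
        have hb1 := hb.1
        simp only [hz] at this ⊢
        linarith
      · have := ha.2
        nlinarith
    · have h1 : f z ≤ 0 := hsign_neg z h
      have h2 : z ≤ Δt * f z := by
        have : K * z ≤ f z := by
          have := hlip z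
          rw [abs_of_nonpos h1, abs_of_nonpos h] at this
          linarith
        calc z = 1 * z := (one_mul z).symm
          _ ≤ (Δt * K) * z := by nlinarith
          _ = Δt * (K * z) := by ring
          _ ≤ Δt * f z := by nlinarith
      constructor
      · have := ha.1; nlinarith
      · have hb2 := hb.2
        simp only [hz] at h2 ⊢
        linarith
  intro i
  have hcard : (0:ℝ) < ((I i).card : ℝ) := by
    exact_mod_cast Nat.pos_of_ne_zero (fun h => by
      simp [Finset.card_eq_zero] at h; exact (hne i).ne_empty h)
  have key : ω i + Δt * ((1 / ((I i).card : ℝ)) * ∑ j ∈ I i, D (ω i - ω j))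
      = (1 / ((I i).card : ℝ)) * ∑ j ∈ I i, (ω i + Δt * D (ω i - ω j)) := by
    rw [Finset.sum_add_distrib, Finset.sum_const, ← Finset.mul_sum]
    field_simp
    ring
  rw [key]
  have hub : ∑ j ∈ I i, (ω i + Δt * D (ω i - ω j)) < ∑ j ∈ I i, (1:ℝ) := by
    apply Finset.sum_lt_sum_of_nonempty (hne i)
    intro j _
    exact (hterm (ω i) (ω j) (hΩ i) (hΩ j)).2
  have hlb : ∑ j ∈ I i, (-1:ℝ) < ∑ j ∈ I i, (ω i + Δt * D (ω i - ω j)) := by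
    apply Finset.sum_lt_sum_of_nonempty (hne i)
    intro j _
    exact (hterm (ω i) (ω j) (hΩ i) (hΩ j)).1
  simp only [Finset.sum_const, nsmul_eq_mul, mul_one, mul_neg_one] at hub hlb
  constructor
  · rw [div_mul_eq_mul_div, one_mul, lt_div_iff₀ hcard]
    linarith
  · rw [div_mul_eq_mul_div, one_mul, div_lt_iff₀ hcard]
    linarith
end

section
/- Let g be a smooth symmetric solution of ∂_t g + ∂_ω(a[g](ω) g) + ∂_m(a[g](m) g) = 0 with zero-flux boundary conditions on a bounded interval Ω, with a[g](ω) = ∫ D(ω-m) g(ω,m) dm / h(ω), h(ω) = ∫ g(ω,m) dm > 0, D = -W' for W smooth even. Define Ṽ(t) = ∫∫ W(ω-m) g(t,ω,m) dω dm. Then d/dt Ṽ(t) = -2 ∫ h(ω) a[g](ω)² dω ≤ 0. -/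
open intervalIntegral MeasureTheory Set

/-- Fubini swap for interval integrals of a continuous function. -/
lemma my_swap (a b c d : ℝ) (hab : a ≤ b) (hcd : c ≤ d) (f : ℝ → ℝ → ℝ)
    (hf : Continuous fun p : ℝ × ℝ => f p.1 p.2) :
    ∫ w in a..b, ∫ m in c..d, f w m = ∫ m in c..d, ∫ w in a..b, f w m := by
  rw [integral_of_le hab, integral_of_le hcd]
  simp_rw [integral_of_le hcd, integral_of_le hab]
  apply MeasureTheory.integral_integral_swap
  rw [Measure.prod_restrict]
  have : IntegrableOn (Function.uncurry f) (Icc a b ×ˢ Icc c d) (volume.prod volume) :=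
    hf.continuousOn.integrableOn_compact (isCompact_Icc.prod isCompact_Icc)
  exact this.mono_set (Set.prod_mono Ioc_subset_Icc_self Ioc_subset_Icc_self)

/-- Differentiating under an interval integral, continuous case. -/
lemma my_param_deriv (a b t : ℝ) (F H : ℝ → ℝ → ℝ)
    (hF : Continuous fun p : ℝ × ℝ => F p.1 p.2)
    (hH : Continuous fun p : ℝ × ℝ => H p.1 p.2)
    (hd : ∀ s m, HasDerivAt (fun s' => F s' m) (H s m) s) :
    HasDerivAt (fun s => ∫ m in a..b, F s m) (∫ m in a..b, H t m) t := by
  obtain ⟨C, hC⟩ := (IsCompact.exists_bound_of_continuousOn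
    ((isCompact_closedBall t 1).prod isCompact_uIcc) hH.continuousOn)
  refine (intervalIntegral.hasDerivAt_integral_of_dominated_loc_of_deriv_le
    (F := F) (F' := H) (bound := fun _ => C) (Metric.ball_mem_nhds t one_pos) ?_ ?_ ?_ ?_ ?_ ?_).2
  · filter_upwards with x
    exact (hF.comp (continuous_const.prodMk continuous_id)).aestronglyMeasurable
  · exact (hF.comp (continuous_const.prodMk continuous_id)).intervalIntegrable a b
  · exact (hH.comp (continuous_const.prodMk continuous_id)).aestronglyMeasurable
  · filter_upwards with m hm x hx
    exact hC (x, m) ⟨Metric.ball_subset_closedBall hx, uIoc_subset_uIcc hm⟩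
  · exact intervalIntegrable_const
  · filter_upwards with m hm x hx
    exact hd x m

/-- Continuity of a parametric interval integral. -/
lemma my_param_cont {X : Type*} [TopologicalSpace X] [FirstCountableTopology X]
    [LocallyCompactSpace X] (a b : ℝ) (f : X → ℝ → ℝ)
    (hf : Continuous fun p : X × ℝ => f p.1 p.2) :
    Continuous fun x => ∫ m in a..b, f x m :=
  intervalIntegral.continuous_parametric_intervalIntegral_of_continuous' (μ := volume) hf a b

/-- Partial derivatives of a smooth function of three real variables. -/
lemma my_pd3 (g : ℝ → ℝ → ℝ → ℝ)
    (hg : ContDiff ℝ (⊤ : ℕ∞) fun p : ℝ × ℝ × ℝ => g p.1 p.2.1 p.2.2) :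
    (∀ v : ℝ × ℝ × ℝ, Continuous fun p : ℝ × ℝ × ℝ =>
        fderiv ℝ (fun q : ℝ × ℝ × ℝ => g q.1 q.2.1 q.2.2) p v) ∧
      (∀ t w m : ℝ, HasDerivAt (fun s => g s w m)
        (fderiv ℝ (fun q : ℝ × ℝ × ℝ => g q.1 q.2.1 q.2.2) (t, w, m) (1, 0, 0)) t) ∧
      (∀ t w m : ℝ, HasDerivAt (fun s => g t s m)
        (fderiv ℝ (fun q : ℝ × ℝ × ℝ => g q.1 q.2.1 q.2.2) (t, w, m) (0, 1, 0)) w) ∧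
      (∀ t w m : ℝ, HasDerivAt (fun s => g t w s)
        (fderiv ℝ (fun q : ℝ × ℝ × ℝ => g q.1 q.2.1 q.2.2) (t, w, m) (0, 0, 1)) m) := by
  have hdiff := hg.differentiable (by simp)
  refine ⟨fun v => (hg.continuous_fderiv (by simp)).clm_apply continuous_const, ?_, ?_, ?_⟩
  · intro t w m
    have hL : HasDerivAt (fun s : ℝ => ((s, w, m) : ℝ × ℝ × ℝ)) ((1,0,0) : ℝ × ℝ × ℝ) t :=
      (hasDerivAt_id t).prodMk ((hasDerivAt_const t w).prodMk (hasDerivAt_const t m))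
    exact (hdiff (t, w, m)).hasFDerivAt.comp_hasDerivAt t hL
  · intro t w m
    have hL : HasDerivAt (fun s : ℝ => ((t, s, m) : ℝ × ℝ × ℝ)) ((0,1,0) : ℝ × ℝ × ℝ) w :=
      (hasDerivAt_const w t).prodMk ((hasDerivAt_id w).prodMk (hasDerivAt_const w m))
    exact (hdiff (t, w, m)).hasFDerivAt.comp_hasDerivAt w hL
  · intro t w m
    have hL : HasDerivAt (fun s : ℝ => ((t, w, s) : ℝ × ℝ × ℝ)) ((0,0,1) : ℝ × ℝ × ℝ) m :=
      (hasDerivAt_const m t).prodMk ((hasDerivAt_const m w).prodMk (hasDerivAt_id m))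
    exact (hdiff (t, w, m)).hasFDerivAt.comp_hasDerivAt m hL

/-- Composition helper for continuity of three-variable functions. -/
lemma my_cg3 {g : ℝ → ℝ → ℝ → ℝ}
    (hgc : Continuous fun p : ℝ × ℝ × ℝ => g p.1 p.2.1 p.2.2)
    {X : Type*} [TopologicalSpace X] {u v w : X → ℝ}
    (hu : Continuous u) (hv : Continuous v) (hw : Continuous w) :
    Continuous fun x => g (u x) (v x) (w x) :=
  hgc.comp (hu.prodMk (hv.prodMk hw))

theorem stmt15 (a b : ℝ) (hab : a < b)
    (W : ℝ → ℝ) (hWsmooth : ContDiff ℝ (⊤ : ℕ∞) W) (hWeven : ∀ z, W (-z) = W z)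
    (D : ℝ → ℝ) (hD : ∀ z, D z = -(deriv W z))
    (g : ℝ → ℝ → ℝ → ℝ)
    (hg : ContDiff ℝ (⊤ : ℕ∞) fun p : ℝ × ℝ × ℝ => g p.1 p.2.1 p.2.2)
    (hsymm : ∀ t w m, g t w m = g t m w)
    (hpos : ∀ t w, 0 < ∫ m in a..b, g t w m)
    (aV : ℝ → ℝ → ℝ)
    (haV : ∀ t w, aV t w = (∫ m in a..b, D (w - m) * g t w m)
      / ∫ m in a..b, g t w m)
    (hpde : ∀ t w m, HasDerivAt (fun s => g s w m)
      (-(deriv (fun x => aV t x * g t x m) w)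
        - deriv (fun y => aV t y * g t w y) m) t)
    (hbc : ∀ t x, aV t a * g t a x = 0 ∧ aV t b * g t b x = 0
      ∧ aV t a * g t x a = 0 ∧ aV t b * g t x b = 0) :
    ∀ t, HasDerivAt (fun s => ∫ w in a..b, ∫ m in a..b, W (w - m) * g s w m)
        (-2 * ∫ w in a..b, (∫ m in a..b, g t w m) * (aV t w) ^ 2) t
      ∧ -2 * (∫ w in a..b, (∫ m in a..b, g t w m) * (aV t w) ^ 2) ≤ 0 := by
  have hgc : Continuous fun p : ℝ × ℝ × ℝ => g p.1 p.2.1 p.2.2 := hg.continuous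
  obtain ⟨hgd_cont, hg1, hg2, hg3⟩ := my_pd3 g hg
  set g1 : ℝ → ℝ → ℝ → ℝ :=
    fun t w m => fderiv ℝ (fun q : ℝ × ℝ × ℝ => g q.1 q.2.1 q.2.2) (t, w, m) (1, 0, 0) with hg1def
  set g2 : ℝ → ℝ → ℝ → ℝ :=
    fun t w m => fderiv ℝ (fun q : ℝ × ℝ × ℝ => g q.1 q.2.1 q.2.2) (t, w, m) (0, 1, 0) with hg2def
  set g3 : ℝ → ℝ → ℝ → ℝ :=
    fun t w m => fderiv ℝ (fun q : ℝ × ℝ × ℝ => g q.1 q.2.1 q.2.2) (t, w, m) (0, 0, 1) with hg3def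
  have hg1c : Continuous fun p : ℝ × ℝ × ℝ => g1 p.1 p.2.1 p.2.2 := hgd_cont (1, 0, 0)
  have hg2c : Continuous fun p : ℝ × ℝ × ℝ => g2 p.1 p.2.1 p.2.2 := hgd_cont (0, 1, 0)
  have hg3c : Continuous fun p : ℝ × ℝ × ℝ => g3 p.1 p.2.1 p.2.2 := hgd_cont (0, 0, 1)
  -- facts about W and D
  have hWc : Continuous W := hWsmooth.continuous
  have hWd : ∀ z, HasDerivAt W (deriv W z) z :=
    fun z => ((hWsmooth.differentiable (by simp)) z).hasDerivAt
  have hWdc : Continuous (deriv W) := hWsmooth.continuous_deriv (by simp)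
  have hWinf : ContDiff ℝ (⊤ : ℕ∞) W := hWsmooth.of_le (by simp)
  have hWsmooth' : ContDiff ℝ (⊤ : ℕ∞) (deriv W) := (contDiff_infty_iff_deriv.mp hWinf).2
  have hWdd : ∀ z, HasDerivAt (deriv W) (deriv (deriv W) z) z :=
    fun z => ((hWsmooth'.differentiable (by simp)) z).hasDerivAt
  have hWddc : Continuous (deriv (deriv W)) := hWsmooth'.continuous_deriv (by simp)
  have hWodd : ∀ z, deriv W (-z) = -(deriv W z) := by
    intro z
    have h1 : HasDerivAt (fun z => W (-z)) (deriv W (-z) * (-1)) z :=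
      (hWd (-z)).comp z (by simpa using hasDerivAt_neg z)
    rw [show (fun z => W (-z)) = W from funext hWeven] at h1
    have h2 := h1.unique (hWd z)
    linarith
  have hDfun : D = fun z => -(deriv W z) := funext hD
  have hDc : Continuous D := by rw [hDfun]; exact hWdc.neg
  have hDd : ∀ z, HasDerivAt D (-(deriv (deriv W) z)) z := by
    rw [hDfun]; exact fun z => (hWdd z).neg
  intro t
  -- abbreviations for fixed t
  have hdenpos : ∀ w, (0:ℝ) < ∫ m in a..b, g t w m := hpos t
  have cden : Continuous fun w => ∫ m in a..b, g t w m :=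
    my_param_cont a b _ (my_cg3 hgc continuous_const continuous_fst continuous_snd)
  have cnum : Continuous fun w => ∫ m in a..b, D (w - m) * g t w m :=
    my_param_cont a b _ ((hDc.comp (continuous_fst.sub continuous_snd)).mul
      (my_cg3 hgc continuous_const continuous_fst continuous_snd))
  have cA : Continuous (aV t) := by
    rw [show aV t = fun w => (∫ m in a..b, D (w - m) * g t w m) / ∫ m in a..b, g t w m
      from funext (haV t)]
    exact cnum.div cden fun w => (hdenpos w).ne'
  -- derivative of aV t
  obtain ⟨A', hA, cA'⟩ : ∃ A' : ℝ → ℝ, (∀ w, HasDerivAt (aV t) (A' w) w) ∧ Continuous A' := by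
    have hden : ∀ w, HasDerivAt (fun w => ∫ m in a..b, g t w m)
        (∫ m in a..b, g2 t w m) w := by
      intro w
      exact my_param_deriv a b w (fun w m => g t w m) (fun w m => g2 t w m)
        (my_cg3 hgc continuous_const continuous_fst continuous_snd)
        (my_cg3 hg2c continuous_const continuous_fst continuous_snd)
        (fun s m => hg2 t s m)
    have hnum : ∀ w, HasDerivAt (fun w => ∫ m in a..b, D (w - m) * g t w m)
        (∫ m in a..b, (-(deriv (deriv W) (w - m)) * g t w m + D (w - m) * g2 t w m)) w := by
      intro w
      refine my_param_deriv a b w (fun w m => D (w - m) * g t w m)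
        (fun w m => -(deriv (deriv W) (w - m)) * g t w m + D (w - m) * g2 t w m)
        ((hDc.comp (continuous_fst.sub continuous_snd)).mul
          (my_cg3 hgc continuous_const continuous_fst continuous_snd))
        (((hWddc.comp (continuous_fst.sub continuous_snd)).neg.mul
          (my_cg3 hgc continuous_const continuous_fst continuous_snd)).add
          ((hDc.comp (continuous_fst.sub continuous_snd)).mul
            (my_cg3 hg2c continuous_const continuous_fst continuous_snd)))
        (fun s m => ?_)
      have hDm : HasDerivAt (fun x => D (x - m)) (-(deriv (deriv W) (s - m))) s := by
        simpa [Function.comp_def] using (hDd (s - m)).comp s ((hasDerivAt_id s).sub_const m)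
      exact hDm.mul (hg2 t s m)
    have cden' : Continuous fun w => ∫ m in a..b, g2 t w m :=
      my_param_cont a b _ (my_cg3 hg2c continuous_const continuous_fst continuous_snd)
    have cnum' : Continuous fun w =>
        ∫ m in a..b, (-(deriv (deriv W) (w - m)) * g t w m + D (w - m) * g2 t w m) :=
      my_param_cont a b _
        (((hWddc.comp (continuous_fst.sub continuous_snd)).neg.mul
          (my_cg3 hgc continuous_const continuous_fst continuous_snd)).add
          ((hDc.comp (continuous_fst.sub continuous_snd)).mul
            (my_cg3 hg2c continuous_const continuous_fst continuous_snd)))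
    refine ⟨fun w => ((∫ m in a..b, (-(deriv (deriv W) (w - m)) * g t w m + D (w - m) * g2 t w m))
        * (∫ m in a..b, g t w m) - (∫ m in a..b, D (w - m) * g t w m) * ∫ m in a..b, g2 t w m)
        / (∫ m in a..b, g t w m) ^ 2, fun w => ?_, ?_⟩
    · have h := (hnum w).div (hden w) (hdenpos w).ne'
      rw [show aV t = fun w => (∫ m in a..b, D (w - m) * g t w m) / ∫ m in a..b, g t w m
        from funext (haV t)]
      exact h
    · exact ((cnum'.mul cden).sub (cnum.mul cden')).div (cden.pow 2)
        fun w => pow_ne_zero 2 (hdenpos w).ne'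
  -- product rule derivatives appearing in the PDE
  have hPw : ∀ w m, HasDerivAt (fun x => aV t x * g t x m)
      (A' w * g t w m + aV t w * g2 t w m) w :=
    fun w m => (hA w).mul (hg2 t w m)
  have hQm : ∀ w m, HasDerivAt (fun y => aV t y * g t w y)
      (A' m * g t w m + aV t m * g3 t w m) m :=
    fun w m => (hA m).mul (hg3 t w m)
  have hE : ∀ w m, g1 t w m = -(A' w * g t w m + aV t w * g2 t w m)
      - (A' m * g t w m + aV t m * g3 t w m) := by
    intro w m
    have h0 := (hg1 t w m).unique (hpde t w m)
    simp only [hg1def]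
    rw [h0, (hPw w m).deriv, (hQm w m).deriv]
  -- the time derivative of the Lyapunov functional
  have hV : HasDerivAt (fun s => ∫ w in a..b, ∫ m in a..b, W (w - m) * g s w m)
      (∫ w in a..b, ∫ m in a..b, W (w - m) * g1 t w m) t := by
    refine my_param_deriv a b t (fun s w => ∫ m in a..b, W (w - m) * g s w m)
      (fun s w => ∫ m in a..b, W (w - m) * g1 s w m) ?_ ?_ ?_
    · exact my_param_cont a b (fun p : ℝ × ℝ => fun m => W (p.2 - m) * g p.1 p.2 m)
        ((hWc.comp ((continuous_snd.comp continuous_fst).sub continuous_snd)).mul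
          (my_cg3 hgc (continuous_fst.comp continuous_fst)
            (continuous_snd.comp continuous_fst) continuous_snd))
    · exact my_param_cont a b (fun p : ℝ × ℝ => fun m => W (p.2 - m) * g1 p.1 p.2 m)
        ((hWc.comp ((continuous_snd.comp continuous_fst).sub continuous_snd)).mul
          (my_cg3 hg1c (continuous_fst.comp continuous_fst)
            (continuous_snd.comp continuous_fst) continuous_snd))
    · intro s w
      refine my_param_deriv a b s (fun s' m => W (w - m) * g s' w m)
        (fun s' m => W (w - m) * g1 s' w m) ?_ ?_ ?_
      · exact (hWc.comp (continuous_const.sub continuous_snd)).mul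
          (my_cg3 hgc continuous_fst continuous_const continuous_snd)
      · exact (hWc.comp (continuous_const.sub continuous_snd)).mul
          (my_cg3 hg1c continuous_fst continuous_const continuous_snd)
      · exact fun s' m => (hg1 s' w m).const_mul (W (w - m))
  -- continuity shortcuts (for fixed t)
  have cgt : Continuous fun p : ℝ × ℝ => g t p.1 p.2 :=
    my_cg3 hgc continuous_const continuous_fst continuous_snd
  have cg2t : Continuous fun p : ℝ × ℝ => g2 t p.1 p.2 :=
    my_cg3 hg2c continuous_const continuous_fst continuous_snd
  have cg3t : Continuous fun p : ℝ × ℝ => g3 t p.1 p.2 :=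
    my_cg3 hg3c continuous_const continuous_fst continuous_snd
  have cWsub : Continuous fun p : ℝ × ℝ => W (p.1 - p.2) :=
    hWc.comp (continuous_fst.sub continuous_snd)
  have cWdsub : Continuous fun p : ℝ × ℝ => deriv W (p.1 - p.2) :=
    hWdc.comp (continuous_fst.sub continuous_snd)
  have cP : Continuous fun p : ℝ × ℝ => A' p.1 * g t p.1 p.2 + aV t p.1 * g2 t p.1 p.2 :=
    ((cA'.comp continuous_fst).mul cgt).add ((cA.comp continuous_fst).mul cg2t)
  have cQ : Continuous fun p : ℝ × ℝ => A' p.2 * g t p.1 p.2 + aV t p.2 * g3 t p.1 p.2 :=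
    ((cA'.comp continuous_snd).mul cgt).add ((cA.comp continuous_snd).mul cg3t)
  have cWP : Continuous fun p : ℝ × ℝ =>
      W (p.1 - p.2) * (A' p.1 * g t p.1 p.2 + aV t p.1 * g2 t p.1 p.2) := cWsub.mul cP
  have cWQ : Continuous fun p : ℝ × ℝ =>
      W (p.1 - p.2) * (A' p.2 * g t p.1 p.2 + aV t p.2 * g3 t p.1 p.2) := cWsub.mul cQ
  have cWd1 : Continuous fun p : ℝ × ℝ =>
      deriv W (p.1 - p.2) * (aV t p.1 * g t p.1 p.2) :=
    cWdsub.mul ((cA.comp continuous_fst).mul cgt)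
  have cWd2 : Continuous fun p : ℝ × ℝ =>
      deriv W (p.1 - p.2) * (aV t p.2 * g t p.1 p.2) :=
    cWdsub.mul ((cA.comp continuous_snd).mul cgt)
  -- split the integrand using the PDE
  have split : (∫ w in a..b, ∫ m in a..b, W (w - m) * g1 t w m)
      = (∫ w in a..b, ∫ m in a..b,
            -(W (w - m) * (A' w * g t w m + aV t w * g2 t w m)))
        + ∫ w in a..b, ∫ m in a..b,
            -(W (w - m) * (A' m * g t w m + aV t m * g3 t w m)) := by
    have oiP : IntervalIntegrable (fun w => ∫ m in a..b,
        -(W (w - m) * (A' w * g t w m + aV t w * g2 t w m))) MeasureTheory.volume a b :=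
      (my_param_cont a b (fun w m => -(W (w - m) * (A' w * g t w m + aV t w * g2 t w m)))
        cWP.neg).intervalIntegrable a b
    have oiQ : IntervalIntegrable (fun w => ∫ m in a..b,
        -(W (w - m) * (A' m * g t w m + aV t m * g3 t w m))) MeasureTheory.volume a b :=
      (my_param_cont a b (fun w m => -(W (w - m) * (A' m * g t w m + aV t m * g3 t w m)))
        cWQ.neg).intervalIntegrable a b
    rw [← intervalIntegral.integral_add oiP oiQ]
    refine intervalIntegral.integral_congr fun w _ => ?_
    beta_reduce
    have iiP : IntervalIntegrable (fun m : ℝ =>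
        -(W (w - m) * (A' w * g t w m + aV t w * g2 t w m))) MeasureTheory.volume a b :=
      Continuous.intervalIntegrable ((cWP.neg).comp (continuous_const.prodMk continuous_id)) a b
    have iiQ : IntervalIntegrable (fun m : ℝ =>
        -(W (w - m) * (A' m * g t w m + aV t m * g3 t w m))) MeasureTheory.volume a b :=
      Continuous.intervalIntegrable ((cWQ.neg).comp (continuous_const.prodMk continuous_id)) a b
    rw [← intervalIntegral.integral_add iiP iiQ]
    refine intervalIntegral.integral_congr fun m _ => ?_
    beta_reduce
    rw [hE w m]
    ring
  have eP : (∫ w in a..b, ∫ m in a..b,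
        -(W (w - m) * (A' w * g t w m + aV t w * g2 t w m)))
      = -(∫ w in a..b, ∫ m in a..b,
          W (w - m) * (A' w * g t w m + aV t w * g2 t w m)) := by
    simp_rw [intervalIntegral.integral_neg]
  have eQ : (∫ w in a..b, ∫ m in a..b,
        -(W (w - m) * (A' m * g t w m + aV t m * g3 t w m)))
      = -(∫ w in a..b, ∫ m in a..b,
          W (w - m) * (A' m * g t w m + aV t m * g3 t w m)) := by
    simp_rw [intervalIntegral.integral_neg]
  -- integration by parts in m
  have hQint : ∀ w, (∫ m in a..b, W (w - m) * (A' m * g t w m + aV t m * g3 t w m))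
      = ∫ m in a..b, deriv W (w - m) * (aV t m * g t w m) := by
    intro w
    have cu' : Continuous fun m : ℝ => deriv W (w - m) * (-1) :=
      (cWdsub.comp (continuous_const.prodMk continuous_id)).mul continuous_const
    have cv' : Continuous fun m : ℝ => A' m * g t w m + aV t m * g3 t w m :=
      cQ.comp (continuous_const.prodMk continuous_id)
    have ibp := intervalIntegral.integral_mul_deriv_eq_deriv_mul
      (u := fun m => W (w - m)) (u' := fun m => deriv W (w - m) * (-1))
      (v := fun m => aV t m * g t w m)
      (v' := fun m => A' m * g t w m + aV t m * g3 t w m)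
      (fun m _ => (hWd (w - m)).comp m (by simpa using (hasDerivAt_id m).const_sub w))
      (fun m _ => hQm w m) (cu'.intervalIntegrable a b) (cv'.intervalIntegrable a b)
    beta_reduce at ibp
    rw [ibp, (hbc t w).2.2.1, (hbc t w).2.2.2]
    have hr : ∀ m : ℝ, deriv W (w - m) * (-1) * (aV t m * g t w m)
        = -(deriv W (w - m) * (aV t m * g t w m)) := fun m => by ring
    simp_rw [hr, intervalIntegral.integral_neg, mul_zero]
    ring
  have TQ : (∫ w in a..b, ∫ m in a..b,
        W (w - m) * (A' m * g t w m + aV t m * g3 t w m))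
      = ∫ w in a..b, ∫ m in a..b, deriv W (w - m) * (aV t m * g t w m) :=
    intervalIntegral.integral_congr fun w _ => hQint w
  -- integration by parts in w (after Fubini)
  have hPint : ∀ m, (∫ w in a..b, W (w - m) * (A' w * g t w m + aV t w * g2 t w m))
      = -(∫ w in a..b, deriv W (w - m) * (aV t w * g t w m)) := by
    intro m
    have cu' : Continuous fun w : ℝ => deriv W (w - m) * 1 :=
      (cWdsub.comp (continuous_id.prodMk continuous_const)).mul continuous_const
    have cv' : Continuous fun w : ℝ => A' w * g t w m + aV t w * g2 t w m :=
      cP.comp (continuous_id.prodMk continuous_const)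
    have ibp := intervalIntegral.integral_mul_deriv_eq_deriv_mul
      (u := fun w => W (w - m)) (u' := fun w => deriv W (w - m) * 1)
      (v := fun w => aV t w * g t w m)
      (v' := fun w => A' w * g t w m + aV t w * g2 t w m)
      (fun w _ => (hWd (w - m)).comp w ((hasDerivAt_id w).sub_const m))
      (fun w _ => hPw w m) (cu'.intervalIntegrable a b) (cv'.intervalIntegrable a b)
    beta_reduce at ibp
    rw [ibp, (hbc t m).1, (hbc t m).2.1]
    have hr : ∀ w : ℝ, deriv W (w - m) * 1 * (aV t w * g t w m)
        = deriv W (w - m) * (aV t w * g t w m) := fun w => by ring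
    simp_rw [hr, mul_zero]
    ring
  have TP : (∫ w in a..b, ∫ m in a..b,
        W (w - m) * (A' w * g t w m + aV t w * g2 t w m))
      = -(∫ w in a..b, ∫ m in a..b, deriv W (w - m) * (aV t w * g t w m)) := by
    have s1 : (∫ w in a..b, ∫ m in a..b,
          W (w - m) * (A' w * g t w m + aV t w * g2 t w m))
        = ∫ m in a..b, ∫ w in a..b,
            W (w - m) * (A' w * g t w m + aV t w * g2 t w m) :=
      my_swap a b a b hab.le hab.le _ cWP
    have s2 : (∫ w in a..b, ∫ m in a..b, deriv W (w - m) * (aV t w * g t w m))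
        = ∫ m in a..b, ∫ w in a..b, deriv W (w - m) * (aV t w * g t w m) :=
      my_swap a b a b hab.le hab.le _ cWd1
    rw [s1, s2, ← intervalIntegral.integral_neg]
    exact intervalIntegral.integral_congr fun m _ => hPint m
  -- evaluate the two remaining terms
  have hnumden : ∀ w, (∫ m in a..b, D (w - m) * g t w m)
      = aV t w * ∫ m in a..b, g t w m :=
    fun w => ((eq_div_iff (hdenpos w).ne').mp (haV t w)).symm
  have hT1 : (∫ w in a..b, ∫ m in a..b, deriv W (w - m) * (aV t w * g t w m))
      = -(∫ w in a..b, (∫ m in a..b, g t w m) * aV t w ^ 2) := by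
    rw [← intervalIntegral.integral_neg]
    refine intervalIntegral.integral_congr fun w _ => ?_
    beta_reduce
    have i1 : (∫ m in a..b, deriv W (w - m) * (aV t w * g t w m))
        = aV t w * ∫ m in a..b, deriv W (w - m) * g t w m := by
      rw [← intervalIntegral.integral_const_mul]
      refine intervalIntegral.integral_congr fun m _ => ?_
      beta_reduce
      ring
    have i2 : (∫ m in a..b, deriv W (w - m) * g t w m)
        = -∫ m in a..b, D (w - m) * g t w m := by
      rw [← intervalIntegral.integral_neg]
      refine intervalIntegral.integral_congr fun m _ => ?_
      beta_reduce
      rw [hD]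
      ring
    rw [i1, i2, hnumden w]
    ring
  have hT2 : (∫ w in a..b, ∫ m in a..b, deriv W (w - m) * (aV t m * g t w m))
      = ∫ w in a..b, (∫ m in a..b, g t w m) * aV t w ^ 2 := by
    have s1 : (∫ w in a..b, ∫ m in a..b, deriv W (w - m) * (aV t m * g t w m))
        = ∫ m in a..b, ∫ w in a..b, deriv W (w - m) * (aV t m * g t w m) :=
      my_swap a b a b hab.le hab.le _ cWd2
    rw [s1]
    refine intervalIntegral.integral_congr fun x _ => ?_
    beta_reduce
    have j1 : (∫ w in a..b, deriv W (w - x) * (aV t x * g t w x))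
        = aV t x * ∫ w in a..b, deriv W (w - x) * g t w x := by
      rw [← intervalIntegral.integral_const_mul]
      refine intervalIntegral.integral_congr fun y _ => ?_
      beta_reduce
      ring
    have j2 : (∫ w in a..b, deriv W (w - x) * g t w x)
        = ∫ m in a..b, D (x - m) * g t x m := by
      refine intervalIntegral.integral_congr fun y _ => ?_
      beta_reduce
      rw [hD, hsymm t y x, show y - x = -(x - y) by ring, hWodd]
    rw [j1, j2, hnumden x]
    ring
  have hval : (∫ w in a..b, ∫ m in a..b, W (w - m) * g1 t w m)
      = -2 * ∫ w in a..b, (∫ m in a..b, g t w m) * aV t w ^ 2 := by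
    rw [split, eP, eQ, TP, TQ, hT1, hT2]
    ring
  refine ⟨?_, ?_⟩
  · rw [← hval]
    exact hV
  · have hnn : 0 ≤ ∫ w in a..b, (∫ m in a..b, g t w m) * aV t w ^ 2 :=
      intervalIntegral.integral_nonneg hab.le
        (fun w _ => mul_nonneg (hdenpos w).le (sq_nonneg _))
    linarith
end
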